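/- Let (M,d) be a cone metric space over a normal cone with normal constant K, and T,S : M → M with S a T-Zamfirescu mapping. Then there exists h ∈ [0,1) such that for all x₀ ∈ M and all n ≥ 1, d(TSⁿ⁺¹x₀, TSⁿx₀) ≤ hⁿ · d(TSx₀, Tx₀) in the cone order. -/

import Mathlib

open Filter Topology

variable {E : Type*}

/-- A cone in a real Banach space. -/
def IsCone [NormedAddCommGroup E] [NormedSpace ℝ E] (P : Set E) : Prop :=
  IsClosed P ∧ P.Nonempty ∧ P ≠ {0} ∧
  (∀ (a b : ℝ), 0 ≤ a → 0 ≤ b → ∀ x ∈ P, ∀ y ∈ P, a • x + b • y ∈ P) ∧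
  (∀ x, x ∈ P → -x ∈ P → x = 0)

/-- The partial order induced by the cone `P`: `x ≤ y` iff `y - x ∈ P`. -/
def coneLe [NormedAddCommGroup E] (P : Set E) (x y : E) : Prop := y - x ∈ P

/-- `x ≪ y` iff `y - x ∈ int P`. -/
def coneLt [NormedAddCommGroup E] (P : Set E) (x y : E) : Prop := y - x ∈ interior P

/-- A normal cone with normal constant `K`. -/
def IsNormalCone [NormedAddCommGroup E] (P : Set E) (K : ℝ) : Prop :=
  0 < K ∧ ∀ x y : E, coneLe P 0 x → coneLe P x y → ‖x‖ ≤ K * ‖y‖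

/-- A cone metric on `M` with values in `E`, relative to the cone `P`. -/
def IsConeMetric [NormedAddCommGroup E] {M : Type*} (P : Set E) (d : M → M → E) : Prop :=
  (∀ x y : M, coneLe P 0 (d x y)) ∧
  (∀ x y : M, d x y = 0 ↔ x = y) ∧
  (∀ x y : M, d x y = d y x) ∧
  (∀ x y z : M, coneLe P (d x y) (d x z + d z y))

/-- Convergence of a sequence in a cone metric space. -/
def ConeConverges [NormedAddCommGroup E] {M : Type*} (P : Set E) (d : M → M → E)
    (s : ℕ → M) (x : M) : Prop :=
  ∀ c : E, coneLt P 0 c → ∃ n₀ : ℕ, ∀ n > n₀, coneLt P (d (s n) x) c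

/-- Cauchy sequence in a cone metric space. -/
def ConeCauchy [NormedAddCommGroup E] {M : Type*} (P : Set E) (d : M → M → E)
    (s : ℕ → M) : Prop :=
  ∀ c : E, coneLt P 0 c → ∃ n₀ : ℕ, ∀ n ≥ n₀, ∀ m ≥ n₀, coneLt P (d (s n) (s m)) c

/-- Completeness of a cone metric space. -/
def ConeComplete [NormedAddCommGroup E] {M : Type*} (P : Set E) (d : M → M → E) : Prop :=
  ∀ s : ℕ → M, ConeCauchy P d s → ∃ x : M, ConeConverges P d s x

/-- Continuity of a self-map of a cone metric space. -/
def ConeContinuous [NormedAddCommGroup E] {M : Type*} (P : Set E) (d : M → M → E)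
    (T : M → M) : Prop :=
  ∀ (s : ℕ → M) (x : M), ConeConverges P d s x → ConeConverges P d (fun n => T (s n)) (T x)

/-- `T` is subsequentially convergent. -/
def SubseqConvergent [NormedAddCommGroup E] {M : Type*} (P : Set E) (d : M → M → E)
    (T : M → M) : Prop :=
  ∀ s : ℕ → M, (∃ y, ConeConverges P d (fun n => T (s n)) y) →
    ∃ φ : ℕ → ℕ, StrictMono φ ∧ ∃ z, ConeConverges P d (fun n => s (φ n)) z

/-- `T` is sequentially convergent. -/
def SeqConvergent [NormedAddCommGroup E] {M : Type*} (P : Set E) (d : M → M → E)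
    (T : M → M) : Prop :=
  ∀ s : ℕ → M, (∃ y, ConeConverges P d (fun n => T (s n)) y) →
    ∃ z, ConeConverges P d s z

/-- `S` is a `T`-Zamfirescu mapping. -/
def TZamfirescu [NormedAddCommGroup E] [NormedSpace ℝ E] {M : Type*} (P : Set E)
    (d : M → M → E) (T S : M → M) : Prop :=
  ∃ a b c : ℝ, 0 ≤ a ∧ a < 1 ∧ 0 ≤ b ∧ b < 1/2 ∧ 0 ≤ c ∧ c < 1/2 ∧
    ∀ x y : M,
      coneLe P (d (T (S x)) (T (S y))) (a • d (T x) (T y)) ∨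
      coneLe P (d (T (S x)) (T (S y))) (b • (d (T x) (T (S x)) + d (T y) (T (S y)))) ∨
      coneLe P (d (T (S x)) (T (S y))) (c • (d (T x) (T (S y)) + d (T y) (T (S x))))

/-- `S` is a `T`-weak contraction. -/
def TWeakContraction [NormedAddCommGroup E] [NormedSpace ℝ E] {M : Type*} (P : Set E)
    (d : M → M → E) (T S : M → M) : Prop :=
  ∃ δ L : ℝ, 0 < δ ∧ δ < 1 ∧ 0 ≤ L ∧
    ∀ x y : M, coneLe P (d (T (S x)) (T (S y))) (δ • d (T x) (T y) + L • d (T y) (T (S x)))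

/-!
Along an orbit `xₙ = Sⁿ x₀`, the distances `uₙ = d(T xₙ₊₁, T xₙ)` satisfy `uₙ₊₁ ≤ h uₙ` with
`h = max a (b / (1 - b)) (c / (1 - c)) < 1`: in the second and third Zamfirescu alternatives
(the third after the triangle inequality) one gets `uₙ₊₁ ≤ t (uₙ + uₙ₊₁)`, which rearranges to
`uₙ₊₁ ≤ t / (1 - t) · uₙ` since the cone order is compatible with nonnegative scaling.
Iterating gives the geometric bound.
-/

section ConeOrder

variable [NormedAddCommGroup E] [NormedSpace ℝ E] {P : Set E}

namespace IsCone

theorem smul_mem (hP : IsCone P) {t : ℝ} (ht : 0 ≤ t) {x : E} (hx : x ∈ P) : t • x ∈ P := by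
  simpa using hP.2.2.2.1 t 0 ht le_rfl x hx x hx

theorem add_mem (hP : IsCone P) {x y : E} (hx : x ∈ P) (hy : y ∈ P) : x + y ∈ P := by
  simpa using hP.2.2.2.1 1 1 zero_le_one zero_le_one x hx y hy

theorem zero_mem (hP : IsCone P) : (0 : E) ∈ P := by
  obtain ⟨x, hx⟩ := hP.2.1
  simpa using hP.smul_mem le_rfl hx

theorem coneLe_refl (hP : IsCone P) (x : E) : coneLe P x x := by
  simpa [coneLe] using hP.zero_mem

theorem coneLe_trans (hP : IsCone P) {x y z : E} (hxy : coneLe P x y) (hyz : coneLe P y z) :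
    coneLe P x z := by
  simpa [coneLe] using hP.add_mem hyz hxy

theorem smul_coneLe_smul (hP : IsCone P) {t : ℝ} (ht : 0 ≤ t) {x y : E} (hxy : coneLe P x y) :
    coneLe P (t • x) (t • y) := by
  simpa [coneLe, smul_sub] using hP.smul_mem ht hxy

theorem smul_coneLe_smul_of_le (hP : IsCone P) {s t : ℝ} (hst : s ≤ t) {x : E}
    (hx : coneLe P 0 x) : coneLe P (s • x) (t • x) := by
  simpa [coneLe, ← sub_smul] using hP.smul_mem (sub_nonneg.mpr hst) hx

theorem coneLe_div_one_sub_smul (hP : IsCone P) {t : ℝ} (ht : t < 1) {u v : E}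
    (h : coneLe P v (t • (u + v))) : coneLe P v ((t / (1 - t)) • u) := by
  have h1t : 0 < 1 - t := sub_pos.mpr ht
  have key : (1 - t)⁻¹ • (t • (u + v) - v) = (t / (1 - t)) • u - v := by
    match_scalars <;> field_simp; ring
  rw [coneLe, ← key]
  exact hP.smul_mem (inv_nonneg.mpr h1t.le) h

theorem coneLe_pow_smul_of_coneLe_smul (hP : IsCone P) {h : ℝ} (hh : 0 ≤ h) {u : ℕ → E}
    (hu : ∀ n, coneLe P (u (n + 1)) (h • u n)) (n : ℕ) : coneLe P (u n) (h ^ n • u 0) := by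
  induction n with
  | zero => simpa using hP.coneLe_refl (u 0)
  | succ n ih =>
    refine hP.coneLe_trans (hu n) ?_
    rw [pow_succ', ← smul_smul]
    exact hP.smul_coneLe_smul hh ih

end IsCone

theorem TZamfirescu.exists_orbit_contraction {M : Type*} {d : M → M → E} {T S : M → M}
    (hP : IsCone P) (hd : IsConeMetric P d) (hTZ : TZamfirescu P d T S) :
    ∃ h : ℝ, 0 ≤ h ∧ h < 1 ∧
      ∀ x, coneLe P (d (T (S (S x))) (T (S x))) (h • d (T (S x)) (T x)) := by
  obtain ⟨a, b, c, ha0, ha1, -, hb1, hc0, hc1, hZ⟩ := hTZ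
  obtain ⟨hpos, hzero, hsymm, htri⟩ := hd
  refine ⟨max a (max (b / (1 - b)) (c / (1 - c))), le_max_of_le_left ha0, ?_, fun x => ?_⟩
  · simp only [max_lt_iff, div_lt_one (by linarith : (0 : ℝ) < 1 - b),
      div_lt_one (by linarith : (0 : ℝ) < 1 - c)]
    exact ⟨ha1, by linarith, by linarith⟩
  set u := d (T (S x)) (T x)
  set v := d (T (S (S x))) (T (S x))
  suffices ∃ t ≤ max a (max (b / (1 - b)) (c / (1 - c))), coneLe P v (t • u) by
    obtain ⟨t, ht, hv⟩ := this
    exact hP.coneLe_trans hv (hP.smul_coneLe_smul_of_le ht (hpos _ _))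
  rcases hZ (S x) x with hv | hv | hv
  · exact ⟨a, le_max_left _ _, hv⟩
  · refine ⟨b / (1 - b), le_max_of_le_right (le_max_left _ _),
      hP.coneLe_div_one_sub_smul (by linarith) ?_⟩
    rwa [hsymm (T x) (T (S x)), hsymm (T (S x)) (T (S (S x))), add_comm] at hv
  · refine ⟨c / (1 - c), le_max_of_le_right (le_max_right _ _),
      hP.coneLe_div_one_sub_smul (by linarith) ?_⟩
    rw [(hzero _ _).mpr rfl, zero_add] at hv
    have hdist : coneLe P (d (T x) (T (S (S x)))) (u + v) := by
      have := htri (T x) (T (S (S x))) (T (S x))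
      rwa [hsymm (T x) (T (S x)), hsymm (T (S x)) (T (S (S x)))] at this
    exact hP.coneLe_trans hv (hP.smul_coneLe_smul hc0 hdist)

end ConeOrder

theorem tz_geometric_bound_general {E M : Type*} [NormedAddCommGroup E]
    [NormedSpace ℝ E] (P : Set E) (hP : IsCone P)
    (d : M → M → E) (hd : IsConeMetric P d)
    (T S : M → M) (hTZ : TZamfirescu P d T S) :
    ∃ h : ℝ, 0 ≤ h ∧ h < 1 ∧ ∀ (x₀ : M) (n : ℕ), 1 ≤ n →
      coneLe P (d (T (S^[n + 1] x₀)) (T (S^[n] x₀)))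
        (h ^ n • d (T (S x₀)) (T x₀)) := by
  obtain ⟨h, hh0, hh1, hstep⟩ := hTZ.exists_orbit_contraction hP hd
  refine ⟨h, hh0, hh1, fun x₀ n _ => ?_⟩
  have horbit : ∀ m, coneLe P (d (T (S^[m + 1 + 1] x₀)) (T (S^[m + 1] x₀)))
      (h • d (T (S^[m + 1] x₀)) (T (S^[m] x₀))) := fun m => by
    simpa only [Function.iterate_succ_apply'] using hstep (S^[m] x₀)
  simpa using hP.coneLe_pow_smul_of_coneLe_smul hh0 horbit n

theorem tz_geometric_bound {E M : Type*} [NormedAddCommGroup E]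
    [NormedSpace ℝ E] [CompleteSpace E] (P : Set E) (K : ℝ) (hP : IsCone P)
    (hK : IsNormalCone P K) (d : M → M → E) (hd : IsConeMetric P d)
    (T S : M → M) (hTZ : TZamfirescu P d T S) :
    ∃ h : ℝ, 0 ≤ h ∧ h < 1 ∧ ∀ (x₀ : M) (n : ℕ), 1 ≤ n →
      coneLe P (d (T (S^[n + 1] x₀)) (T (S^[n] x₀)))
        (h ^ n • d (T (S x₀)) (T x₀)) :=
  tz_geometric_bound_general P hP d hd T S hTZ
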